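/- arXiv:2407.03881 — 4 statements merged into one kernel-verified Lean document; each statement's English description precedes it below -/
import Mathlib

section
/- Let C be a convex set in an infinite-dimensional real Hilbert space H. Then the following are equivalent: (1) C is somewhat bounded; (2) there exist z₀ ∈ C, a finite-dimensional subspace F ⊂ H, and α, β > 0 such that α·B_F ⊆ C − z₀ ⊆ D_F(α,β), where B_F is the closed unit ball of F and D_F(α,β) = { x ∈ H : ‖π_{F⊥}(x)‖ − β ≤ α⁻¹β‖π_F(x)‖ } (π_F and π_{F⊥} denoting the orthogonal projections onto F and its orthogonal complement F⊥). -/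
/-! Write `x = u + v` with `u ∈ F`, `v ∈ F⊥`. Pushing `x` towards the point `-(α/‖u‖)•u` of the
ball `α·B_F` along the convex combination with weight `t = α/(α + ‖u‖)` kills the `F`-component and
leaves `t•v ∈ F⊥ ∩ (C - x₀)`. So a bound `M` on that set gives `α‖v‖ ≤ M(α + ‖u‖)`, which is the
cone condition `C - x₀ ⊆ D_F(α, β)`; conversely, `D_F(α, β) ∩ F⊥` is the ball of radius `β`. -/

open Bornology

variable {H : Type*} [NormedAddCommGroup H] [InnerProductSpace ℝ H]

/-- A convex set `C` in an infinite-dimensional Hilbert space `H` is *somewhat bounded*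
if there are `x₀ ∈ C`, a finite-dimensional subspace `F ⊂ H` and `α > 0` such that
`α·B_F ⊆ C − x₀` and `F⊥ ∩ (C − x₀)` is bounded. -/
def SomewhatBounded (C : Set H) : Prop :=
  ∃ x₀ ∈ C, ∃ F : Submodule ℝ H, FiniteDimensional ℝ F ∧ ∃ α : ℝ, 0 < α ∧
    {y : H | y ∈ F ∧ ‖y‖ ≤ α} ⊆ (· - x₀) '' C ∧
    IsBounded ((Fᗮ : Set H) ∩ ((· - x₀) '' C))

/-- `D_F(α,β) = { x ∈ H : ‖π_{F⊥}(x)‖ − β ≤ α⁻¹β‖π_F(x)‖ }`. -/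
noncomputable def DSet [CompleteSpace H] (F : Submodule ℝ H) [Submodule.HasOrthogonalProjection F]
    (α β : ℝ) : Set H :=
  {x : H | ‖(Submodule.orthogonalProjectionOnto Fᗮ x : H)‖ - β ≤ α⁻¹ * β * ‖(Submodule.orthogonalProjectionOnto F x : H)‖}

theorem Convex.mul_norm_le_of_ball_subset {E : Type*} [NormedAddCommGroup E] [NormedSpace ℝ E]
    {S : Set E} (hS : Convex ℝ S) {F G : Submodule ℝ E} {α M : ℝ} (hα : 0 < α)
    (hball : {y : E | y ∈ F ∧ ‖y‖ ≤ α} ⊆ S) (hM : ∀ p ∈ (G : Set E) ∩ S, ‖p‖ ≤ M)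
    {u v : E} (hu : u ∈ F) (hv : v ∈ G) (huv : u + v ∈ S) :
    α * ‖v‖ ≤ M * (α + ‖u‖) := by
  obtain rfl | hu0 := eq_or_ne u 0
  · rw [zero_add] at huv
    simpa [mul_comm] using mul_le_mul_of_nonneg_left (hM v ⟨hv, huv⟩) hα.le
  have hnu : 0 < ‖u‖ := norm_pos_iff.2 hu0
  have hαu : 0 < α + ‖u‖ := by positivity
  set t := α / (α + ‖u‖)
  have hw : -(α / ‖u‖) • u ∈ S := hball ⟨F.smul_mem _ hu, by
    rw [norm_smul, norm_neg, Real.norm_of_nonneg (by positivity), div_mul_cancel₀ _ hnu.ne']⟩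
  have hcomb : t • (u + v) + (1 - t) • -(α / ‖u‖) • u = t • v := by
    have hcoeff : (1 - t) * -(α / ‖u‖) = -t := by
      unfold t
      field_simp
      ring
    rw [smul_smul, hcoeff]
    module
  have htv : t • v ∈ S := hcomb ▸ hS huv hw (by positivity)
    (by rw [sub_nonneg, div_le_one hαu]; linarith) (by ring)
  have htv_le := hM _ ⟨G.smul_mem t hv, htv⟩
  rwa [norm_smul, Real.norm_of_nonneg (by positivity), div_mul_eq_mul_div, div_le_iff₀ hαu] at htv_le

section DSet

variable [CompleteSpace H] {F : Submodule ℝ H} [F.HasOrthogonalProjection] {α β : ℝ}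

theorem mem_DSet_iff (hα : 0 < α) {x : H} :
    x ∈ DSet F α β ↔ α * ‖Fᗮ.starProjection x‖ ≤ β * (α + ‖F.starProjection x‖) := by
  simp only [DSet, Set.mem_ofPred_eq, Submodule.coe_orthogonalProjectionOnto_apply]
  rw [sub_le_iff_le_add, ← le_div_iff₀' hα]
  field_simp
  ring_nf

theorem exists_subset_DSet_of_isBounded {S : Set H} (hS : Convex ℝ S) (hα : 0 < α)
    (hball : {y : H | y ∈ F ∧ ‖y‖ ≤ α} ⊆ S) (hbdd : IsBounded ((Fᗮ : Set H) ∩ S)) :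
    ∃ β, 0 < β ∧ S ⊆ DSet F α β := by
  obtain ⟨M, hM⟩ := hbdd.exists_norm_le
  refine ⟨max M 1, by positivity, fun x hx ↦ (mem_DSet_iff hα).2 ?_⟩
  calc α * ‖Fᗮ.starProjection x‖ ≤ M * (α + ‖F.starProjection x‖) :=
        hS.mul_norm_le_of_ball_subset hα hball hM (F.starProjection_apply_mem x)
          (Fᗮ.starProjection_apply_mem x)
          (by rwa [Submodule.starProjection_add_starProjection_orthogonal])
    _ ≤ max M 1 * (α + ‖F.starProjection x‖) := by gcongr; exact le_max_left M 1

theorem isBounded_inter_orthogonal_of_subset_DSet {S : Set H} (hS : S ⊆ DSet F α β) :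
    IsBounded ((Fᗮ : Set H) ∩ S) := by
  refine isBounded_iff_forall_norm_le.2 ⟨β, fun x ⟨hxF, hxS⟩ ↦ ?_⟩
  have hx := hS hxS
  simp only [DSet, Set.mem_ofPred_eq, Submodule.coe_orthogonalProjectionOnto_apply,
    Submodule.starProjection_eq_self_iff.2 hxF,
    (F.starProjection_apply_eq_zero_iff).2 hxF, norm_zero, mul_zero] at hx
  linarith

end DSet

theorem somewhatBounded_iff_general [CompleteSpace H]
    (C : Set H) (hC : Convex ℝ C) :
    SomewhatBounded C ↔
      ∃ z₀ ∈ C, ∃ F : Submodule ℝ H, ∃ _ : FiniteDimensional ℝ F, ∃ α β : ℝ,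
        0 < α ∧ 0 < β ∧ {y : H | y ∈ F ∧ ‖y‖ ≤ α} ⊆ (· - z₀) '' C ∧
        (· - z₀) '' C ⊆ DSet F α β := by
  constructor
  · rintro ⟨x₀, hx₀, F, hF, α, hα, hball, hbdd⟩
    have hC₀ : Convex ℝ ((· - x₀) '' C) := by simpa [sub_eq_neg_add] using hC.translate (-x₀)
    obtain ⟨β, hβ, hD⟩ := exists_subset_DSet_of_isBounded hC₀ hα hball hbdd
    exact ⟨x₀, hx₀, F, hF, α, β, hα, hβ, hball, hD⟩
  · rintro ⟨z₀, hz₀, F, hF, α, β, hα, -, hball, hD⟩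
    exact ⟨z₀, hz₀, F, hF, α, hα, hball, isBounded_inter_orthogonal_of_subset_DSet hD⟩

/-- A convex set `C` in an infinite-dimensional Hilbert space `H` is somewhat bounded
if and only if there are `z₀ ∈ C`, a finite-dimensional subspace `F ⊂ H` and `α, β > 0`
such that `α·B_F ⊆ C − z₀ ⊆ D_F(α,β)`. -/
theorem somewhatBounded_iff [CompleteSpace H] (hH : ¬ FiniteDimensional ℝ H)
    (C : Set H) (hC : Convex ℝ C) :
    SomewhatBounded C ↔
      ∃ z₀ ∈ C, ∃ F : Submodule ℝ H, ∃ _ : FiniteDimensional ℝ F, ∃ α β : ℝ,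
        0 < α ∧ 0 < β ∧ {y : H | y ∈ F ∧ ‖y‖ ≤ α} ⊆ (· - z₀) '' C ∧
        (· - z₀) '' C ⊆ DSet F α β :=
  somewhatBounded_iff_general C hC
end

section
/- Let C be a closed, convex, somewhat bounded set in a separable, infinite-dimensional real Hilbert space H. Then there is a dense open set ℛ ⊆ 𝒩(C) (with respect to the topology of pointwise convergence) such that every f ∈ ℛ has a fixed point. -/
open Bornology

variable {H : Type*} [NormedAddCommGroup H] [InnerProductSpace ℝ H]

/-- `𝒩(C)`: the nonexpansive self-mappings of `C`, with the topology of pointwise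
convergence (subtype of `C → C` with the product topology). -/
abbrev Nonexp (C : Set H) :=
  {f : C → C // ∀ x y : C, dist (f x) (f y) ≤ dist x y}

/-!
Far from `x₀`, a somewhat bounded convex set `C` looks like a cone over a compact base: by
convexity, the `F`-component of the direction of a far point of `C` is bounded below. Compactness
of the unit ball of `F`, together with the fact that no infinite family of vectors in a ball has
pairwise inner products `< -δ`, gives finitely many far directions `t` such that every far
direction makes inner product `≥ κ > 0` with one of them; the points `x₀ + R • t ∈ C` are then
closer by `K` than `x₀` to every far point.

If `g` has range in a ball of radius `N` around `x₀` and a fixed point `b`, take `K = N + 2`: a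
nonexpansive `f` that is `1`-close to `g` at these finitely many points and moves `b` by less
than `1` moves no far point by less than `1`. The orbit of `b` under `f` is therefore bounded, and
the asymptotic centre of that orbit is a fixed point of `f`. So such `g` lie in the interior of the
set of maps with a fixed point, and they are dense: `x₀ + n/(n+1) • r_n (f z - x₀)`, with `r_n` the
radial retraction onto the ball of radius `n`, are contractions converging pointwise to `f`.
-/

open Filter Metric Function Set Topology
open scoped InnerProductSpace

lemma not_pairwise_inner_lt_neg {u : ℕ → H} {B δ : ℝ} (hB : ∀ n, ‖u n‖ ≤ B) (hδ : 0 < δ) :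
    ¬ Pairwise fun i j => ⟪u i, u j⟫_ℝ < -δ := by
  intro hu
  -- `0 ≤ ‖∑ i ≤ n, u i‖ ^ 2 ≤ (n + 1) * (B ^ 2 - n * δ)`, which is negative for large `n`
  obtain ⟨n, hn⟩ := exists_nat_gt (B ^ 2 / δ)
  set I := Finset.range (n + 1)
  have hrow : ∀ i ∈ I, ∑ j ∈ I, ⟪u i, u j⟫_ℝ ≤ B ^ 2 - n * δ := by
    intro i hi
    have hoff : ∑ j ∈ I.erase i, ⟪u i, u j⟫_ℝ ≤ (I.erase i).card • -δ :=
      Finset.sum_le_card_nsmul _ _ _ fun j hj => (hu (Finset.ne_of_mem_erase hj).symm).le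
    rw [Finset.card_erase_of_mem hi, Finset.card_range, nsmul_eq_mul] at hoff
    rw [← Finset.add_sum_erase _ _ hi, real_inner_self_eq_norm_sq]
    push_cast at hoff
    nlinarith [hB i, norm_nonneg (u i)]
  have hsum : 0 ≤ ∑ i ∈ I, ∑ j ∈ I, ⟪u i, u j⟫_ℝ := by
    have := real_inner_self_nonneg (x := ∑ i ∈ I, u i)
    rw [sum_inner] at this
    simpa only [inner_sum] using this
  have := hsum.trans (Finset.sum_le_card_nsmul _ _ _ hrow)
  rw [Finset.card_range, nsmul_eq_mul, div_lt_iff₀ hδ] at *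
  push_cast at this
  nlinarith

lemma exists_finite_inner_ge_of_not_pairwise {S : Set H} {κ : ℝ}
    (hS : ∀ s : ℕ → H, (∀ n, s n ∈ S) → ¬ Pairwise fun i j => ⟪s i, s j⟫_ℝ < κ) :
    ∃ T ⊆ S, T.Finite ∧ ∀ s ∈ S, ∃ t ∈ T, κ ≤ ⟪s, t⟫_ℝ := by
  by_contra! h
  have : Std.Symm fun a b : H => ⟪b, a⟫_ℝ < κ := ⟨fun a b hab => by rwa [real_inner_comm]⟩
  obtain ⟨s, hsS, hs⟩ := exists_seq_of_forall_finset_exists' (· ∈ S) (fun a b => ⟪b, a⟫_ℝ < κ)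
    fun T hT => h T hT T.finite_toSet
  exact hS s hsS fun i j hij => by simpa [real_inner_comm] using hs hij

lemma inner_eq_inner_starProjection_add (K : Submodule ℝ H) [K.HasOrthogonalProjection]
    (x y : H) :
    ⟪x, y⟫_ℝ = ⟪K.starProjection x, K.starProjection y⟫_ℝ
      + ⟪x - K.starProjection x, y - K.starProjection y⟫_ℝ := by
  have hx := K.starProjection_inner_eq_zero x (K.starProjection y) (K.starProjection_apply_mem y)
  have hy := K.starProjection_inner_eq_zero y (K.starProjection x) (K.starProjection_apply_mem x)
  rw [real_inner_comm] at hy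
  simp only [inner_sub_left, inner_sub_right] at hx hy ⊢
  linarith

lemma exists_finite_inner_ge_of_le_norm_starProjection (F : Submodule ℝ H)
    [FiniteDimensional ℝ F] {S : Set H} {c : ℝ} (hc : 0 < c)
    (hS : ∀ s ∈ S, ‖s‖ ≤ 1 ∧ c ≤ ‖F.starProjection s‖) :
    ∃ T ⊆ S, T.Finite ∧ ∀ s ∈ S, ∃ t ∈ T, c ^ 2 / 2 ≤ ⟪s, t⟫_ℝ := by
  refine exists_finite_inner_ge_of_not_pairwise fun s hsS hs => ?_
  -- along a subsequence the `F`-parts are `c ^ 2 / 4`-close, which forces the `Fᗮ`-parts to have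
  -- pairwise inner products `< -c ^ 2 / 4`
  set P := F.starProjection
  have hcpt : IsCompact ((↑) '' closedBall (0 : F) 1 : Set H) :=
    (isCompact_closedBall _ _).image continuous_subtype_val
  obtain ⟨_, -, φ, hφ, hlim⟩ := hcpt.tendsto_subseq (x := fun n => P (s n)) fun n =>
    ⟨⟨P (s n), F.starProjection_apply_mem _⟩,
      by simpa using (F.norm_starProjection_apply_le _).trans (hS _ (hsS n)).1, rfl⟩
  obtain ⟨N, hN⟩ := Metric.cauchySeq_iff'.1 hlim.cauchySeq (c ^ 2 / 8) (by positivity)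
  refine not_pairwise_inner_lt_neg (u := fun k => s (φ (k + N)) - P (s (φ (k + N))))
    (B := 1) (δ := c ^ 2 / 4) (fun k => ?_) (by positivity) fun i j hij => ?_
  · rw [← F.starProjection_orthogonal_val]
    exact (Fᗮ.norm_starProjection_apply_le _).trans (hS _ (hsS _)).1
  · set a := s (φ (i + N))
    set b := s (φ (j + N))
    have hab : ⟪a, b⟫_ℝ < c ^ 2 / 2 := hs (hφ.injective.ne (by omega))
    have hPab : ‖P a - P b‖ < c ^ 2 / 4 := by
      have := (dist_triangle_right _ _ _).trans_lt
        (add_lt_add (hN (i + N) (by omega)) (hN (j + N) (by omega)))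
      simp only [comp_apply, dist_eq_norm] at this
      linarith
    have hPa := hS a (hsS _)
    have hPa1 : ‖P a‖ ≤ 1 := (F.norm_starProjection_apply_le _).trans hPa.1
    have hPP : c ^ 2 - c ^ 2 / 4 ≤ ⟪P a, P b⟫_ℝ := by
      have h1 : ⟪P a, P b⟫_ℝ = ‖P a‖ ^ 2 - ⟪P a, P a - P b⟫_ℝ := by
        rw [inner_sub_right, real_inner_self_eq_norm_sq]; ring
      have h2 := real_inner_le_norm (P a) (P a - P b)
      nlinarith [norm_nonneg (P a), norm_nonneg (P a - P b)]
    have := inner_eq_inner_starProjection_add F a b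
    linarith

lemma norm_smul_sub_smul_le_sub {e e' : H} (he : ‖e‖ = 1) (he' : ‖e'‖ = 1) {κ r R K : ℝ}
    (hκ : κ ≤ ⟪e, e'⟫_ℝ) (hK : 0 ≤ K) (hR : 0 ≤ R) (hRκ : 2 * K ≤ R * κ)
    (hRr : R ^ 2 ≤ 2 * K * r) (hKr : K ≤ r) :
    ‖r • e - R • e'‖ ≤ r - K := by
  have hsq : ‖r • e - R • e'‖ ^ 2 = r ^ 2 - 2 * r * R * ⟪e, e'⟫_ℝ + R ^ 2 := by
    rw [norm_sub_sq_real, real_inner_smul_left, real_inner_smul_right, norm_smul, norm_smul,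
      he, he', mul_one, mul_one, Real.norm_eq_abs, Real.norm_eq_abs, sq_abs, sq_abs]
    ring
  have hrR : r * (R * κ) ≤ r * R * ⟪e, e'⟫_ℝ := by
    rw [← mul_assoc]; exact mul_le_mul_of_nonneg_left hκ (by nlinarith)
  refine (pow_le_pow_iff_left₀ (norm_nonneg _) (sub_nonneg.2 hKr) two_ne_zero).1 ?_
  nlinarith

lemma mul_norm_sub_starProjection_le {C : Set H} (hC : Convex ℝ C) {x₀ : H} (F : Submodule ℝ H)
    [F.HasOrthogonalProjection] {α M : ℝ} (hα : 0 < α)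
    (hball : ∀ y ∈ F, ‖y‖ ≤ α → x₀ + y ∈ C) (hslice : ∀ x ∈ C, x - x₀ ∈ Fᗮ → ‖x - x₀‖ ≤ M)
    {x : H} (hx : x ∈ C) :
    α * ‖x - x₀ - F.starProjection (x - x₀)‖ ≤ M * (‖F.starProjection (x - x₀)‖ + α) := by
  -- the segment from `x` to the point `x₀ - (α / ‖v‖) • v` of the `F`-ball meets `x₀ + Fᗮ`
  -- at `x₀ + t • w`
  set v := F.starProjection (x - x₀)
  set w := x - x₀ - v
  set t := α / (‖v‖ + α)
  have ht : 0 < t := by positivity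
  have ht1 : t ≤ 1 := div_le_one_of_le₀ (by linarith [norm_nonneg v]) (by positivity)
  have hu : x₀ - (α / ‖v‖) • v ∈ C := by
    refine sub_eq_add_neg x₀ _ ▸
      hball _ (F.neg_mem (F.smul_mem _ (F.starProjection_apply_mem _))) ?_
    rw [norm_neg, norm_smul, Real.norm_of_nonneg (by positivity)]
    rcases eq_or_ne ‖v‖ 0 with hv | hv
    · simp [hv, hα.le]
    · rw [div_mul_cancel₀ _ hv]
  have hcoef : ((1 - t) * (α / ‖v‖)) • v = t • v := by
    rcases eq_or_ne v 0 with hv | hv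
    · simp [hv]
    · have : ‖v‖ ≠ 0 := norm_ne_zero_iff.2 hv
      congr 1
      simp only [t]
      field_simp
      ring
  have hz : t • x + (1 - t) • (x₀ - (α / ‖v‖) • v) ∈ C :=
    hC hx hu ht.le (by linarith) (by ring)
  have hzw : t • x + (1 - t) • (x₀ - (α / ‖v‖) • v) - x₀ = t • w := by
    rw [smul_sub, ← smul_assoc, smul_eq_mul, hcoef]
    simp only [w, smul_sub]
    module
  have := hslice _ hz (hzw ▸ Fᗮ.smul_mem t (F.sub_starProjection_mem_orthogonal _))
  rw [hzw, norm_smul, Real.norm_of_nonneg ht.le, div_mul_eq_mul_div, div_le_iff₀ (by positivity)]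
    at this
  exact this

lemma le_mul_norm_starProjection_of_far {C : Set H} (hC : Convex ℝ C) {x₀ : H}
    (F : Submodule ℝ H) [F.HasOrthogonalProjection] {α M : ℝ} (hα : 0 < α)
    (hball : ∀ y ∈ F, ‖y‖ ≤ α → x₀ + y ∈ C) (hslice : ∀ x ∈ C, x - x₀ ∈ Fᗮ → ‖x - x₀‖ ≤ M)
    {x : H} (hx : x ∈ C) (hfar : 2 * M ≤ ‖x - x₀‖) :
    ‖x - x₀‖ ≤ 2 * (1 + M / α) * ‖F.starProjection (x - x₀)‖ := by
  have hcone := mul_norm_sub_starProjection_le hC F hα hball hslice hx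
  have hsplit := norm_add_le (F.starProjection (x - x₀)) (x - x₀ - F.starProjection (x - x₀))
  rw [add_sub_cancel] at hsplit
  rw [mul_add, ← le_div_iff₀' hα, add_div, mul_div_cancel_right₀ _ hα.ne', mul_div_right_comm]
    at hcone
  linarith

theorem exists_finite_subset_forall_far_norm_sub_le {C : Set H} (hC : Convex ℝ C) {x₀ : H}
    (hx₀ : x₀ ∈ C) (F : Submodule ℝ H) [FiniteDimensional ℝ F] {α M : ℝ} (hα : 0 < α)
    (hball : ∀ y ∈ F, ‖y‖ ≤ α → x₀ + y ∈ C) (hslice : ∀ x ∈ C, x - x₀ ∈ Fᗮ → ‖x - x₀‖ ≤ M)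
    {K : ℝ} (hK : 0 < K) :
    ∃ P ⊆ C, P.Finite ∧ ∃ ρ, ∀ x ∈ C, ρ ≤ ‖x - x₀‖ → ∃ p ∈ P, ‖x - p‖ ≤ ‖x - x₀‖ - K := by
  have hM : 0 ≤ M := by simpa using hslice x₀ hx₀ (by simp)
  set c := (2 * (1 + M / α))⁻¹
  have hc : 0 < c := by positivity
  set κ := c ^ 2 / 2
  set R := 2 * K / κ
  have hR : 0 < R := by positivity
  set ρ := 2 * M + K + R + R ^ 2 / (2 * K)
  have hρ : ∀ r, ρ ≤ r → 2 * M ≤ r ∧ K ≤ r ∧ R ≤ r ∧ R ^ 2 ≤ 2 * K * r := fun r hr => by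
    have : 0 ≤ R ^ 2 / (2 * K) := by positivity
    have : R ^ 2 / (2 * K) ≤ r := by linarith
    exact ⟨by linarith, by linarith, by linarith, (div_le_iff₀' (by positivity)).1 this⟩
  set S := {e | ∃ x ∈ C, ρ ≤ ‖x - x₀‖ ∧ e = ‖x - x₀‖⁻¹ • (x - x₀)}
  have hS : ∀ e ∈ S, ‖e‖ = 1 ∧ c ≤ ‖F.starProjection e‖ := by
    rintro _ ⟨x, hx, hρx, rfl⟩
    have hr : 0 < ‖x - x₀‖ := by linarith [(hρ _ hρx).2.1]
    refine ⟨norm_smul_inv_norm (norm_pos_iff.1 hr), ?_⟩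
    rw [map_smul, norm_smul, norm_inv, norm_norm, ← div_eq_inv_mul, le_div_iff₀ hr,
      inv_mul_le_iff₀ (by positivity)]
    exact le_mul_norm_starProjection_of_far hC F hα hball hslice hx (hρ _ hρx).1
  obtain ⟨T, hTS, hTfin, hT⟩ :=
    exists_finite_inner_ge_of_le_norm_starProjection F hc fun e he => ⟨(hS e he).1.le, (hS e he).2⟩
  refine ⟨(fun t => x₀ + R • t) '' T, ?_, hTfin.image _, ρ, fun x hx hρx => ?_⟩
  · rintro _ ⟨_, ht, rfl⟩
    obtain ⟨x', hx', hρx', rfl⟩ := hTS ht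
    have hr' : 0 < ‖x' - x₀‖ := by linarith [(hρ _ hρx').2.1]
    dsimp only
    rw [smul_smul, ← div_eq_mul_inv]
    exact hC.add_smul_sub_mem hx₀ hx' ⟨by positivity, (div_le_one hr').2 (hρ _ hρx').2.2.1⟩
  · obtain ⟨h2M, hKr, -, hRr⟩ := hρ _ hρx
    have hr : 0 < ‖x - x₀‖ := by linarith
    obtain ⟨t, ht, hκt⟩ := hT _ ⟨x, hx, hρx, rfl⟩
    refine ⟨_, mem_image_of_mem _ ht, ?_⟩
    have hxp : x - (x₀ + R • t) = ‖x - x₀‖ • (‖x - x₀‖⁻¹ • (x - x₀)) - R • t := by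
      rw [smul_smul, mul_inv_cancel₀ hr.ne', one_smul]; abel
    rw [hxp]
    exact norm_smul_sub_smul_le_sub (hS _ ⟨x, hx, hρx, rfl⟩).1 (hS t (hTS ht)).1 hκt hK.le hR.le
      (by rw [div_mul_cancel₀ _ (by positivity)]) hRr hKr

theorem SomewhatBounded.exists_finite_subset_forall_far_norm_sub_le {C : Set H}
    (hsb : SomewhatBounded C) (hC : Convex ℝ C) :
    ∃ x₀ ∈ C, ∀ K, 0 < K → ∃ P ⊆ C, P.Finite ∧
      ∃ ρ, ∀ x ∈ C, ρ ≤ ‖x - x₀‖ → ∃ p ∈ P, ‖x - p‖ ≤ ‖x - x₀‖ - K := by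
  obtain ⟨x₀, hx₀, F, hF, α, hα, hball, hslice⟩ := hsb
  obtain ⟨M, hM⟩ := isBounded_iff_forall_norm_le.1 hslice
  refine ⟨x₀, hx₀, fun K hK => _root_.exists_finite_subset_forall_far_norm_sub_le hC hx₀ F hα
    (fun y hy hyα => ?_) (fun x hx hxF => hM _ ⟨hxF, x, hx, rfl⟩) hK⟩
  obtain ⟨c, hc, hcy⟩ := hball ⟨hy, hyα⟩
  simpa [← hcy] using hc

section AsymptoticRadius

variable {α : Type*} [PseudoMetricSpace α]

noncomputable def asympRadiusSq (x : ℕ → α) (y : α) : ℝ :=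
  limsup (fun n => dist y (x n) ^ 2) atTop

lemma isBoundedUnder_dist_sq {x : ℕ → α} (hx : IsBounded (range x)) (y : α) :
    IsBoundedUnder (· ≤ ·) atTop fun n => dist y (x n) ^ 2 := by
  obtain ⟨r, hr⟩ := (isBounded_iff_subset_closedBall y).1 hx
  exact isBoundedUnder_of ⟨r ^ 2, fun n =>
    pow_le_pow_left₀ dist_nonneg (by simpa [dist_comm] using hr (mem_range_self n)) 2⟩

lemma asympRadiusSq_nonneg {x : ℕ → α} (hx : IsBounded (range x)) (y : α) :
    0 ≤ asympRadiusSq x y :=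
  le_limsup_of_frequently_le (Frequently.of_forall fun _ => sq_nonneg _)
    (isBoundedUnder_dist_sq hx y)

lemma asympRadiusSq_le_of_eventually_le {x : ℕ → α} {y : α} {a : ℝ}
    (h : ∀ᶠ n in atTop, dist y (x n) ^ 2 ≤ a) : asympRadiusSq x y ≤ a :=
  limsup_le_of_le (isCoboundedUnder_le_of_le atTop fun _ => sq_nonneg _) h

lemma eventually_dist_sq_lt_asympRadiusSq_add {x : ℕ → α} (hx : IsBounded (range x)) (y : α)
    {ε : ℝ} (hε : 0 < ε) : ∀ᶠ n in atTop, dist y (x n) ^ 2 < asympRadiusSq x y + ε :=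
  eventually_lt_of_limsup_lt (lt_add_of_pos_right _ hε) (isBoundedUnder_dist_sq hx y)

lemma asympRadiusSq_le_of_dist_le_shift {x : ℕ → α} (hx : IsBounded (range x)) {y y' : α}
    (h : ∀ n, dist y' (x (n + 1)) ≤ dist y (x n)) : asympRadiusSq x y' ≤ asympRadiusSq x y := by
  rw [asympRadiusSq, ← limsup_nat_add _ 1]
  exact limsup_le_limsup (Eventually.of_forall fun n => pow_le_pow_left₀ dist_nonneg (h n) 2)
    (isCoboundedUnder_le_of_le atTop fun _ => sq_nonneg _) (isBoundedUnder_dist_sq hx y)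

lemma asympRadiusSq_le_add {x : ℕ → α} (hx : IsBounded (range x)) (y : α) {z : α} {B : ℝ}
    (hB : ∀ n, dist z (x n) ≤ B) :
    asympRadiusSq x y ≤ asympRadiusSq x z + dist y z * (2 * B + dist y z) := by
  refine le_of_forall_pos_le_add fun ε hε => asympRadiusSq_le_of_eventually_le ?_
  filter_upwards [eventually_dist_sq_lt_asympRadiusSq_add hx z hε] with n hn
  have := pow_le_pow_left₀ dist_nonneg (dist_triangle y z (x n)) 2
  nlinarith [hB n, dist_nonneg (x := y) (y := z)]

lemma continuous_asympRadiusSq {x : ℕ → α} (hx : IsBounded (range x)) :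
    Continuous (asympRadiusSq x) := by
  refine continuous_iff_continuousAt.2 fun z => ?_
  obtain ⟨B, hB⟩ := (isBounded_iff_subset_closedBall z).1 hx
  have hzB : ∀ n, dist z (x n) ≤ B := fun n => by simpa [dist_comm] using hB (mem_range_self n)
  refine continuousAt_of_locally_lipschitz one_pos (2 * B + 3) fun y hy => ?_
  have hyB : ∀ n, dist y (x n) ≤ B + 1 := fun n => by linarith [dist_triangle y z (x n), hzB n]
  have h₁ := asympRadiusSq_le_add hx y hzB
  have h₂ := asympRadiusSq_le_add hx z hyB
  rw [dist_comm z y] at h₂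
  rw [Real.dist_eq, abs_le]
  constructor <;> nlinarith [dist_nonneg (x := y) (y := z)]

end AsymptoticRadius

lemma asympRadiusSq_midpoint_add_le {x : ℕ → H} (hx : IsBounded (range x)) (y z : H) :
    asympRadiusSq x (midpoint ℝ y z) + dist y z ^ 2 / 4
      ≤ (asympRadiusSq x y + asympRadiusSq x z) / 2 := by
  refine le_of_forall_pos_le_add fun ε hε => ?_
  suffices asympRadiusSq x (midpoint ℝ y z)
      ≤ (asympRadiusSq x y + asympRadiusSq x z) / 2 - dist y z ^ 2 / 4 + ε by linarith
  refine asympRadiusSq_le_of_eventually_le ?_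
  filter_upwards [eventually_dist_sq_lt_asympRadiusSq_add hx y hε,
    eventually_dist_sq_lt_asympRadiusSq_add hx z hε] with n hy hz
  have := EuclideanGeometry.dist_sq_add_dist_sq_eq_two_mul_dist_midpoint_sq_add_half_dist_sq
    (x n) y z
  rw [dist_comm (x n), dist_comm (x n), dist_comm (x n)] at this
  linarith

theorem exists_isMinOn_of_midpoint_add_le {E : Type*} [NormedAddCommGroup E] [NormedSpace ℝ E]
    {C : Set E} (hC : IsComplete C) (hCconv : Convex ℝ C) (hne : C.Nonempty) {φ : E → ℝ}
    (hφ : ContinuousOn φ C) (hbdd : BddBelow (φ '' C))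
    (hmid : ∀ y ∈ C, ∀ z ∈ C, φ (midpoint ℝ y z) + dist y z ^ 2 / 4 ≤ (φ y + φ z) / 2) :
    ∃ y ∈ C, IsMinOn φ C y := by
  set μ := sInf (φ '' C)
  have hμ : ∀ y ∈ C, μ ≤ φ y := fun y hy => csInf_le hbdd (mem_image_of_mem φ hy)
  obtain ⟨v, hv_anti, hv_lim, hvC⟩ := exists_seq_tendsto_sInf (hne.image φ) hbdd
  choose y hyC hyv using hvC
  have hcauchy : CauchySeq y := by
    refine cauchySeq_of_le_tendsto_0' (fun n => √(4 * (v n - μ))) (fun n m hnm => ?_) ?_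
    · have := hmid _ (hyC n) _ (hyC m)
      have := hμ _ (hCconv.midpoint_mem (hyC n) (hyC m))
      have := hv_anti hnm
      exact Real.le_sqrt_of_sq_le (by linarith [hyv n, hyv m])
    · have := ((hv_lim.sub_const μ).const_mul 4).sqrt
      rwa [sub_self, mul_zero, Real.sqrt_zero] at this
  obtain ⟨y₀, hy₀C, hlim⟩ := cauchySeq_tendsto_of_isComplete hC hyC hcauchy
  have hφy₀ : Tendsto (φ ∘ y) atTop (𝓝 (φ y₀)) :=
    (hφ y₀ hy₀C).tendsto.comp (tendsto_nhdsWithin_iff.2 ⟨hlim, Eventually.of_forall hyC⟩)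
  have : φ y₀ = μ := tendsto_nhds_unique hφy₀ (by simpa [comp_def, hyv] using hv_lim)
  exact ⟨y₀, hy₀C, fun z hz => this ▸ hμ z hz⟩

theorem exists_fixedPoint_of_isBounded_orbit [CompleteSpace H] {C : Set H} (hCcl : IsClosed C)
    (hCconv : Convex ℝ C) {h : C → C} (hh : LipschitzWith 1 h) (b : C)
    (hb : IsBounded (range fun n => (h^[n] b : H))) : ∃ y, h y = y := by
  set x := fun n => (h^[n] b : H)
  -- `y` is an asymptotic centre of the orbit; `h y` is one as well, and centres are unique
  obtain ⟨y, hyC, hmin⟩ := exists_isMinOn_of_midpoint_add_le hCcl.isComplete hCconv ⟨b, b.2⟩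
    (continuous_asympRadiusSq hb).continuousOn
    ⟨0, forall_mem_image.2 fun y _ => asympRadiusSq_nonneg hb y⟩
    fun y _ z _ => asympRadiusSq_midpoint_add_le hb y z
  lift y to C using hyC
  have hshift : asympRadiusSq x (h y) ≤ asympRadiusSq x y :=
    asympRadiusSq_le_of_dist_le_shift hb fun n => by
      simpa [x, iterate_succ_apply', Subtype.dist_eq] using hh.dist_le_mul y (h^[n] b)
  have hmid := asympRadiusSq_midpoint_add_le hb y (h y)
  have h₁ := isMinOn_iff.1 hmin _ (hCconv.midpoint_mem y.2 (h y).2)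
  have h₂ := isMinOn_iff.1 hmin _ (h y).2
  refine ⟨y, Subtype.ext (dist_le_zero.1 ?_).symm⟩
  nlinarith [dist_nonneg (x := (h y : H)) (y := y), dist_comm (h y : H) y]

lemma norm_sub_le_of_inner_sub_nonpos {a b u v : H} (hu : ⟪a - u, v - u⟫_ℝ ≤ 0)
    (hv : ⟪b - v, u - v⟫_ℝ ≤ 0) : ‖u - v‖ ≤ ‖a - b‖ := by
  have hsq : ‖u - v‖ ^ 2 ≤ ⟪a - b, u - v⟫_ℝ := by
    have : a - b = (a - u) - (b - v) + (u - v) := by abel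
    have huv : ⟪a - u, u - v⟫_ℝ = -⟪a - u, v - u⟫_ℝ := by rw [← inner_neg_right, neg_sub]
    rw [this, inner_add_left, inner_sub_left, real_inner_self_eq_norm_sq, huv]
    linarith
  nlinarith [real_inner_le_norm (a - b) (u - v), norm_nonneg (u - v), norm_nonneg (a - b)]

noncomputable def radialRetraction (N : ℝ) (a : H) : H :=
  if ‖a‖ ≤ N then a else (N / ‖a‖) • a

section RadialRetraction

variable {N : ℝ}

lemma radialRetraction_of_norm_le {a : H} (h : ‖a‖ ≤ N) : radialRetraction N a = a := if_pos h

lemma exists_radialRetraction_eq_smul (hN : 0 ≤ N) (a : H) :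
    ∃ s ∈ Icc (0 : ℝ) 1, radialRetraction N a = s • a := by
  unfold radialRetraction
  split_ifs with h
  · exact ⟨1, ⟨zero_le_one, le_rfl⟩, (one_smul _ _).symm⟩
  · push Not at h
    exact ⟨N / ‖a‖, ⟨by positivity, (div_le_one (hN.trans_lt h)).2 h.le⟩, rfl⟩

lemma norm_radialRetraction_le (hN : 0 ≤ N) (a : H) : ‖radialRetraction N a‖ ≤ N := by
  unfold radialRetraction
  split_ifs with h
  · exact h
  · push Not at h
    rw [norm_smul, Real.norm_of_nonneg (by positivity), div_mul_cancel₀ _ (hN.trans_lt h).ne']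

lemma inner_sub_radialRetraction_nonpos (hN : 0 ≤ N) (a : H) {c : H} (hc : ‖c‖ ≤ N) :
    ⟪a - radialRetraction N a, c - radialRetraction N a⟫_ℝ ≤ 0 := by
  unfold radialRetraction
  split_ifs with h
  · simp
  · push Not at h
    have ha : 0 < ‖a‖ := hN.trans_lt h
    have hac : ⟪a, c⟫_ℝ ≤ N * ‖a‖ := by
      nlinarith [real_inner_le_norm a c, norm_nonneg c]
    have : a - (N / ‖a‖) • a = (1 - N / ‖a‖) • a := by rw [sub_smul, one_smul]
    rw [this, real_inner_smul_left, inner_sub_right, real_inner_smul_right,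
      real_inner_self_eq_norm_sq]
    refine mul_nonpos_of_nonneg_of_nonpos (sub_nonneg.2 ((div_le_one ha).2 h.le)) ?_
    rw [div_mul_eq_mul_div, sq, mul_div_assoc, mul_div_cancel_right₀ _ ha.ne']
    linarith

lemma lipschitzWith_radialRetraction (hN : 0 ≤ N) :
    LipschitzWith 1 (radialRetraction N : H → H) :=
  LipschitzWith.of_dist_le_mul fun a b => by
    rw [NNReal.coe_one, one_mul, dist_eq_norm, dist_eq_norm]
    exact norm_sub_le_of_inner_sub_nonpos
      (inner_sub_radialRetraction_nonpos hN a (norm_radialRetraction_le hN b))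
      (inner_sub_radialRetraction_nonpos hN b (norm_radialRetraction_le hN a))

end RadialRetraction

noncomputable def shrinkToward (x₀ : H) (t N : ℝ) (y : H) : H :=
  x₀ + t • radialRetraction N (y - x₀)

section ShrinkToward

variable {x₀ : H} {t N : ℝ}

lemma Convex.shrinkToward_mem {C : Set H} (hC : Convex ℝ C) (hx₀ : x₀ ∈ C) (ht : t ∈ Icc 0 1)
    (hN : 0 ≤ N) {y : H} (hy : y ∈ C) : shrinkToward x₀ t N y ∈ C := by
  obtain ⟨s, hs, hrs⟩ := exists_radialRetraction_eq_smul hN (y - x₀)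
  rw [shrinkToward, hrs, smul_smul]
  exact hC.add_smul_sub_mem hx₀ hy ⟨mul_nonneg ht.1 hs.1, mul_le_one₀ ht.2 hs.1 hs.2⟩

lemma dist_shrinkToward_le (ht : 0 ≤ t) (hN : 0 ≤ N) (y y' : H) :
    dist (shrinkToward x₀ t N y) (shrinkToward x₀ t N y') ≤ t * dist y y' := by
  rw [shrinkToward, shrinkToward, dist_add_left, dist_smul₀, Real.norm_of_nonneg ht]
  gcongr
  simpa using (lipschitzWith_radialRetraction hN).dist_le_mul (y - x₀) (y' - x₀)

lemma dist_shrinkToward_self_le (ht : 0 ≤ t) (hN : 0 ≤ N) (y : H) :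
    dist (shrinkToward x₀ t N y) x₀ ≤ t * N := by
  rw [shrinkToward, dist_eq_norm, add_sub_cancel_left, norm_smul, Real.norm_of_nonneg ht]
  exact mul_le_mul_of_nonneg_left (norm_radialRetraction_le hN _) ht

lemma shrinkToward_of_norm_le {y : H} (h : ‖y - x₀‖ ≤ N) :
    shrinkToward x₀ t N y = x₀ + t • (y - x₀) := by
  rw [shrinkToward, radialRetraction_of_norm_le h]

end ShrinkToward

lemma natCast_div_add_one_mem_Icc (n : ℕ) : (n / (n + 1) : ℝ) ∈ Icc 0 1 :=
  ⟨by positivity, (div_le_one (by positivity)).2 (by linarith)⟩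

lemma Nonexp.lipschitzWith {E : Type*} [NormedAddCommGroup E] {C : Set E} (f : Nonexp C) :
    LipschitzWith 1 f.1 :=
  LipschitzWith.of_dist_le_mul fun x y => by simpa using f.2 x y

section Approximation

variable {C : Set H} (hC : Convex ℝ C) {x₀ : H} (hx₀ : x₀ ∈ C)

noncomputable def approxNonexp (f : Nonexp C) (n : ℕ) : Nonexp C :=
  ⟨fun z => ⟨shrinkToward x₀ (n / (n + 1)) n (f.1 z),
      hC.shrinkToward_mem hx₀ (natCast_div_add_one_mem_Icc n) n.cast_nonneg (f.1 z).2⟩,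
    fun y z => by
      have := dist_shrinkToward_le (x₀ := x₀) (natCast_div_add_one_mem_Icc n).1 n.cast_nonneg
        (f.1 y) (f.1 z)
      refine (Subtype.dist_eq _ _).trans_le (this.trans ?_)
      exact (mul_le_of_le_one_left dist_nonneg (natCast_div_add_one_mem_Icc n).2).trans (f.2 y z)⟩

lemma tendsto_approxNonexp (f : Nonexp C) :
    Tendsto (approxNonexp hC hx₀ f) atTop (𝓝 f) := by
  refine tendsto_subtype_rng.2 (tendsto_pi_nhds.2 fun z => tendsto_subtype_rng.2 ?_)
  have hlim : Tendsto (fun n : ℕ => x₀ + (n / (n + 1) : ℝ) • ((f.1 z : H) - x₀)) atTop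
      (𝓝 (f.1 z : H)) := by
    simpa using ((tendsto_natCast_div_add_atTop (1 : ℝ)).smul_const ((f.1 z : H) - x₀)).const_add x₀
  refine hlim.congr' ?_
  filter_upwards [eventually_ge_atTop ⌈‖(f.1 z : H) - x₀‖⌉₊] with n hn
  exact (shrinkToward_of_norm_le ((Nat.ceil_le.1 hn))).symm

lemma isBounded_range_approxNonexp (f : Nonexp C) (n : ℕ) :
    IsBounded (range fun z => ((approxNonexp hC hx₀ f n).1 z : H)) :=
  isBounded_closedBall.subset <| range_subset_iff.2 fun _ =>
    dist_shrinkToward_self_le (natCast_div_add_one_mem_Icc n).1 n.cast_nonneg _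

lemma exists_fixedPoint_approxNonexp [CompleteSpace H] (hCcl : IsClosed C) (f : Nonexp C)
    (n : ℕ) : ∃ b, (approxNonexp hC hx₀ f n).1 b = b := by
  have : CompleteSpace C := hCcl.completeSpace_coe
  have : Nonempty C := ⟨⟨x₀, hx₀⟩⟩
  have hcontr : ContractingWith (n / (n + 1)) (approxNonexp hC hx₀ f n).1 := by
    refine ⟨(div_lt_one (by positivity)).2 (lt_add_one _),
      LipschitzWith.of_dist_le_mul fun y z => ?_⟩
    have ht := natCast_div_add_one_mem_Icc n
    refine (Subtype.dist_eq _ _).trans_le ((dist_shrinkToward_le ht.1 n.cast_nonneg _ _).trans ?_)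
    push_cast
    exact mul_le_mul_of_nonneg_left (f.2 y z) ht.1
  exact ⟨_, hcontr.fixedPoint_isFixedPt⟩

end Approximation

lemma norm_sub_lt_of_dist_apply_lt {E : Type*} [NormedAddCommGroup E] {C P : Set E} {x₀ : E}
    {ρ K L : ℝ} (hPC : P ⊆ C)
    (hP : ∀ x ∈ C, ρ ≤ ‖x - x₀‖ → ∃ p ∈ P, ‖x - p‖ ≤ ‖x - x₀‖ - K) {h : C → C}
    (hh : LipschitzWith 1 h) (hhP : ∀ p : C, (p : E) ∈ P → ‖(h p : E) - x₀‖ ≤ L) {y : C}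
    (hy : dist (h y) y < K - L) : ‖(y : E) - x₀‖ < ρ := by
  by_contra! hρ
  obtain ⟨p, hpP, hyp⟩ := hP y y.2 hρ
  set p' : C := ⟨p, hPC hpP⟩
  have hhyp : ‖(h y : E) - h p'‖ ≤ ‖(y : E) - p‖ := by
    simpa [Subtype.dist_eq, dist_eq_norm] using hh.dist_le_mul y p'
  rw [Subtype.dist_eq, dist_eq_norm] at hy
  have := norm_sub_le_norm_sub_add_norm_sub (h y : E) (h p') x₀
  have := norm_sub_le_norm_sub_add_norm_sub (y : E) (h y) x₀
  linarith [hhP p' hpP, norm_sub_rev (y : E) (h y)]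

theorem mem_interior_of_isBounded_range_of_fixedPoint [CompleteSpace H] {C : Set H}
    (hCcl : IsClosed C) (hCconv : Convex ℝ C) (hsb : SomewhatBounded C) {g : Nonexp C}
    (hg : IsBounded (range fun z => (g.1 z : H))) {b : C} (hb : g.1 b = b) :
    g ∈ interior {f : Nonexp C | ∃ x, f.1 x = x} := by
  obtain ⟨x₀, -, hfar⟩ := hsb.exists_finite_subset_forall_far_norm_sub_le hCconv
  obtain ⟨N, hN⟩ := (isBounded_iff_subset_closedBall x₀).1 hg
  have hN0 : 0 ≤ N := nonempty_closedBall.1 ⟨_, hN (mem_range_self b)⟩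
  -- maps `1`-close to `g` on `P` send `P` into the ball of radius `N + 1`, hence, by the choice
  -- `K = N + 2`, move every far point by at least `1`
  obtain ⟨P, hPC, hPfin, ρ, hP⟩ := hfar (N + 2) (by linarith)
  set W : Set (Nonexp C) := (fun f => f.1 b) ⁻¹' ball b 1 ∩
    ⋂ z ∈ Subtype.val ⁻¹' P, (fun f => f.1 z) ⁻¹' ball (g.1 z) 1
  have hWopen : IsOpen W :=
    (isOpen_ball.preimage ((continuous_apply b).comp continuous_subtype_val)).inter <|
      (hPfin.preimage Subtype.val_injective.injOn).isOpen_biInter fun z _ =>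
        isOpen_ball.preimage ((continuous_apply z).comp continuous_subtype_val)
  refine mem_interior.2 ⟨W, fun f hf => ?_, hWopen, by simp [W, hb]⟩
  simp only [W, mem_inter_iff, mem_preimage, mem_ball, mem_iInter₂] at hf
  have hfP : ∀ p : C, (p : H) ∈ P → ‖(f.1 p : H) - x₀‖ ≤ N + 1 := fun p hp => by
    have := dist_triangle (f.1 p : H) (g.1 p) x₀
    rw [← Subtype.dist_eq] at this
    linarith [(hf.2 p hp).le, mem_closedBall.1 (hN (mem_range_self p)), dist_eq_norm (f.1 p : H) x₀]
  have horbit : range (fun n => (f.1^[n] b : H)) ⊆ ball x₀ ρ := by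
    rintro _ ⟨n, rfl⟩
    refine mem_ball_iff_norm.2 (norm_sub_lt_of_dist_apply_lt hPC hP f.lipschitzWith hfP ?_)
    have := f.lipschitzWith.dist_iterate_succ_le_geometric b n
    rw [iterate_succ_apply', dist_comm b] at this
    simp only [NNReal.coe_one, one_pow, mul_one] at this
    linarith [hf.1, dist_comm (f.1^[n] b) (f.1 (f.1^[n] b))]
  exact exists_fixedPoint_of_isBounded_orbit hCcl hCconv f.lipschitzWith b
    (isBounded_ball.subset horbit)

theorem exists_denseOpen_fixedPoint_general [CompleteSpace H]
    (C : Set H) (hCcl : IsClosed C) (hCconv : Convex ℝ C)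
    (hsb : SomewhatBounded C) :
    ∃ R : Set (Nonexp C), IsOpen R ∧ Dense R ∧ ∀ f ∈ R, ∃ x : C, f.1 x = x := by
  obtain ⟨x₀, hx₀, -⟩ := id hsb
  refine ⟨interior {f | ∃ x : C, f.1 x = x}, isOpen_interior, fun f => ?_, interior_subset⟩
  refine mem_closure_of_tendsto (tendsto_approxNonexp hCconv hx₀ f) (.of_forall fun n => ?_)
  obtain ⟨b, hb⟩ := exists_fixedPoint_approxNonexp hCconv hx₀ hCcl f n
  exact mem_interior_of_isBounded_range_of_fixedPoint hCcl hCconv hsb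
    (isBounded_range_approxNonexp hCconv hx₀ f n) hb

/-- On a closed, convex, somewhat bounded set `C` in a separable infinite-dimensional
Hilbert space, there is a dense open set `ℛ ⊆ 𝒩(C)` such that every `f ∈ ℛ` has a
fixed point. -/
theorem exists_denseOpen_fixedPoint [CompleteSpace H] [TopologicalSpace.SeparableSpace H]
    (hH : ¬ FiniteDimensional ℝ H) (C : Set H) (hCcl : IsClosed C) (hCconv : Convex ℝ C)
    (hsb : SomewhatBounded C) :
    ∃ R : Set (Nonexp C), IsOpen R ∧ Dense R ∧ ∀ f ∈ R, ∃ x : C, f.1 x = x :=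
  exists_denseOpen_fixedPoint_general C hCcl hCconv hsb
end

section
/- Let C be a LUR (locally uniformly rotund) set in a real Hilbert space H, and let x, y, z ∈ C with y ∈ ∂C and x ≠ y ≠ z. If r, s > 0 satisfy r ≤ ‖x − y‖ ≤ s, then ⟨(z − y)/‖z − y‖, (x − y)/‖x − y‖⟩ ≥ − s / √(s² + 4·δ_C(x,r)²), where δ_C(x,r) is the modulus of convexity of C at x. -/
/-!
The midpoint `m` of `x` and `y` is admissible in the infimum defining `δ = δ_C(x,r)`, so the
open ball of radius `δ` about `m` avoids `∂C` and hence lies in the interior of `C`. By convexity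
the ray from the boundary point `y` pointing away from `z` misses the interior of `C`, so it stays
at distance at least `δ` from `m`. When the angle at `y` is obtuse, the closest point of that ray
to `m` is at distance `(‖x − y‖/2)·√(1 − c²)`, `c` being the cosine in question; this gives
`4δ² ≤ s²(1 − c²)`, which is stronger than the claimed bound.
-/

open Metric RealInnerProductSpace

variable {H : Type*} [NormedAddCommGroup H] [InnerProductSpace ℝ H]

/-- The modulus of convexity of `C` at `x`:
`δ_C(x,ε) = inf { dist((x+y)/2, ∂C) : y ∈ C, ‖y−x‖ ≥ ε }`. -/
noncomputable def lurModulus (C : Set H) (x : H) (ε : ℝ) : ℝ :=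
  sInf ((fun y => infDist ((2 : ℝ)⁻¹ • (x + y)) (frontier C)) '' {y ∈ C | ε ≤ ‖y - x‖})

/-- `C` is locally uniformly rotund (LUR): it is convex, has nonempty boundary, and
`δ_C(x,ε) > 0` for every `x ∈ C` and every `ε ∈ (0, Δ_C(x))`; here the condition
`ε < Δ_C(x) = sup{‖y−x‖ : y ∈ C}` is expressed as `∃ y ∈ C, ε < ‖y − x‖`. -/
def IsLUR (C : Set H) : Prop :=
  Convex ℝ C ∧ (frontier C).Nonempty ∧
    ∀ x ∈ C, ∀ ε : ℝ, 0 < ε → (∃ y ∈ C, ε < ‖y - x‖) → 0 < lurModulus C x ε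

theorem IsPreconnected.subset_interior_of_disjoint_frontier {X : Type*} [TopologicalSpace X]
    {s t : Set X} (hs : IsPreconnected s) (hst : (s ∩ t).Nonempty)
    (hd : Disjoint s (frontier t)) : s ⊆ interior t := by
  obtain ⟨a, has, hat⟩ := hst
  have ha : a ∈ interior t := self_sdiff_frontier t ▸ ⟨hat, hd.notMem_of_mem_left has⟩
  refine hs.subset_left_of_subset_union isOpen_interior isOpen_interior
    (disjoint_compl_right.mono interior_subset interior_subset) ?_ ⟨a, has, ha⟩
  rw [← compl_frontier_eq_union_interior]
  exact hd.subset_compl_right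

theorem ball_infDist_frontier_subset_interior {E : Type*} [NormedAddCommGroup E]
    [NormedSpace ℝ E] {s : Set E} {m : E} (hm : m ∈ s) :
    ball m (infDist m (frontier s)) ⊆ interior s := by
  rcases (ball m (infDist m (frontier s))).eq_empty_or_nonempty with hempty | hne
  · simp [hempty]
  · exact (convex_ball _ _).isPreconnected.subset_interior_of_disjoint_frontier
      ⟨m, mem_ball_self (nonempty_ball.1 hne), hm⟩
      (Set.subset_compl_iff_disjoint_right.1 ball_infDist_subset_compl)

/-- The ray from a boundary point `y` of a convex set pointing away from a point `z` of its
closure misses the interior: otherwise `y` would lie strictly between an interior point and `z`. -/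
theorem Convex.sub_smul_sub_notMem_interior {E : Type*} [AddCommGroup E] [Module ℝ E]
    [TopologicalSpace E] [IsTopologicalAddGroup E] [ContinuousConstSMul ℝ E] {s : Set E}
    (hs : Convex ℝ s) {y z : E} (hy : y ∈ frontier s) (hz : z ∈ closure s) {t : ℝ}
    (ht : 0 ≤ t) : y - t • (z - y) ∉ interior s := by
  intro hp
  have ht1 : 1 + t ≠ 0 := by positivity
  have hcombo : (1 + t)⁻¹ • (y - t • (z - y)) + (t / (1 + t)) • z = y := by
    match_scalars <;> field_simp <;> ring
  apply hy.2
  rw [← hcombo]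
  exact hs.combo_interior_closure_mem_interior hp hz (by positivity) (by positivity)
    (by field_simp)

theorem sq_inner_le_of_forall_le_norm_add_smul {E : Type*} [NormedAddCommGroup E]
    [InnerProductSpace ℝ E] {u v : E} {δ : ℝ} (hv : v ≠ 0) (hδ : 0 ≤ δ) (huv : ⟪u, v⟫ ≤ 0)
    (h : ∀ t : ℝ, 0 ≤ t → δ ≤ ‖u + t • v‖) : ⟪u, v⟫ ^ 2 ≤ ‖v‖ ^ 2 * (‖u‖ ^ 2 - δ ^ 2) := by
  have hv2 : 0 < ‖v‖ ^ 2 := by positivity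
  set t := -⟪u, v⟫ / ‖v‖ ^ 2
  have hmin : ‖u + t • v‖ ^ 2 = ‖u‖ ^ 2 - ⟪u, v⟫ ^ 2 / ‖v‖ ^ 2 := by
    rw [norm_add_sq_real, inner_smul_right, norm_smul, Real.norm_eq_abs, mul_pow, sq_abs]
    simp only [t]
    field_simp
    ring
  have hδt := pow_le_pow_left₀ hδ (h t (div_nonneg (neg_nonneg.2 huv) hv2.le)) 2
  rw [hmin, le_sub_iff_add_le, ← le_sub_iff_add_le', div_le_iff₀ hv2] at hδt
  linarith

theorem neg_div_sqrt_le_of_sq_mul_le {c d s δ : ℝ} (hd : 0 < d) (hds : d ≤ s)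
    (h : (d * c) ^ 2 ≤ d ^ 2 - 4 * δ ^ 2) : -(s / √(s ^ 2 + 4 * δ ^ 2)) ≤ c := by
  have hA : 0 < s ^ 2 + 4 * δ ^ 2 := by nlinarith
  have hc : c ^ 2 ≤ s ^ 2 / (s ^ 2 + 4 * δ ^ 2) := by
    rw [le_div_iff₀ hA, ← mul_le_mul_iff_right₀ (pow_pos hd 2)]
    nlinarith [mul_le_mul_of_nonneg_right h hA.le,
      mul_le_mul_of_nonneg_left (pow_le_pow_left₀ hd.le hds 2) (sq_nonneg δ),
      pow_nonneg (sq_nonneg δ) 2]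
  have habs := Real.abs_le_sqrt hc
  rw [Real.sqrt_div' _ hA.le, Real.sqrt_sq (hd.le.trans hds)] at habs
  exact neg_le_of_abs_le habs

theorem lurModulus_nonneg (C : Set H) (x : H) (ε : ℝ) : 0 ≤ lurModulus C x ε :=
  Real.sInf_nonneg (by rintro _ ⟨w, -, rfl⟩; exact infDist_nonneg)

theorem lurModulus_le_infDist_midpoint {C : Set H} {x y : H} {ε : ℝ} (hy : y ∈ C)
    (hε : ε ≤ ‖y - x‖) : lurModulus C x ε ≤ infDist ((2 : ℝ)⁻¹ • (x + y)) (frontier C) :=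
  csInf_le ⟨0, by rintro _ ⟨w, -, rfl⟩; exact infDist_nonneg⟩ ⟨y, ⟨hy, hε⟩, rfl⟩

theorem lurModulus_le_norm_half_add_smul {C : Set H} (hC : Convex ℝ C) {x y z : H}
    (hx : x ∈ C) (hy : y ∈ C) (hyb : y ∈ frontier C) (hz : z ∈ C) {r : ℝ}
    (hr : r ≤ ‖x - y‖) {t : ℝ} (ht : 0 ≤ t) :
    lurModulus C x r ≤ ‖(2 : ℝ)⁻¹ • (x - y) + t • (z - y)‖ := by
  have hm : (2 : ℝ)⁻¹ • (x + y) ∈ C := by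
    simpa only [smul_add] using hC hx hy (by norm_num) (by norm_num) (by norm_num)
  by_contra! hlt
  refine hC.sub_smul_sub_notMem_interior hyb (subset_closure hz) ht
    (ball_infDist_frontier_subset_interior hm ?_)
  have hdiff : -(y - t • (z - y) - (2 : ℝ)⁻¹ • (x + y)) = (2 : ℝ)⁻¹ • (x - y) + t • (z - y) := by
    module
  rw [mem_ball, dist_eq_norm, ← norm_neg, hdiff]
  exact hlt.trans_le (lurModulus_le_infDist_midpoint hy (by rwa [norm_sub_rev]))

theorem inner_ge_of_lur_general (C : Set H) (hC : IsLUR C) (x y z : H)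
    (hx : x ∈ C) (hy : y ∈ C) (hz : z ∈ C) (hyb : y ∈ frontier C)
    (hxy : x ≠ y) (hzy : z ≠ y) (r s : ℝ)
    (hrxy : r ≤ ‖x - y‖) (hxys : ‖x - y‖ ≤ s) :
    -(s / Real.sqrt (s ^ 2 + 4 * lurModulus C x r ^ 2)) ≤
      ⟪‖z - y‖⁻¹ • (z - y), ‖x - y‖⁻¹ • (x - y)⟫ := by
  set f := ‖z - y‖⁻¹ • (z - y)
  set c := ⟪f, ‖x - y‖⁻¹ • (x - y)⟫
  have hd : 0 < ‖x - y‖ := norm_pos_iff.2 (sub_ne_zero.2 hxy)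
  rcases le_or_gt 0 c with hc | hc
  · exact (neg_nonpos.2 (div_nonneg (hd.le.trans hxys) (Real.sqrt_nonneg _))).trans hc
  have hf : ‖f‖ = 1 := norm_smul_inv_norm (sub_ne_zero.2 hzy)
  have hu : ⟪(2 : ℝ)⁻¹ • (x - y), f⟫ = 2⁻¹ * ‖x - y‖ * c := by
    simp only [c, real_inner_smul_right, real_inner_comm f]
    field_simp
  have hray (t : ℝ) (ht : 0 ≤ t) : lurModulus C x r ≤ ‖(2 : ℝ)⁻¹ • (x - y) + t • f‖ := by
    simpa only [f, smul_smul] using lurModulus_le_norm_half_add_smul hC.1 hx hy hyb hz hrxy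
      (mul_nonneg ht (inv_nonneg.2 (norm_nonneg (z - y))))
  have hcos := sq_inner_le_of_forall_le_norm_add_smul (norm_ne_zero_iff.1 (hf ▸ one_ne_zero))
    (lurModulus_nonneg C x r) (hu ▸ mul_nonpos_of_nonneg_of_nonpos (by positivity) hc.le) hray
  rw [hu, hf, norm_smul, Real.norm_of_nonneg (by norm_num)] at hcos
  exact neg_div_sqrt_le_of_sq_mul_le hd hxys (by nlinarith [hcos])

/-- If `C` is LUR, `x, y, z ∈ C` with `y ∈ ∂C`, `x ≠ y ≠ z`, and `r ≤ ‖x − y‖ ≤ s` with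
`r, s > 0`, then `⟪(z−y)/‖z−y‖, (x−y)/‖x−y‖⟫ ≥ −s/√(s² + 4·δ_C(x,r)²)`. -/
theorem inner_ge_of_lur (C : Set H) (hC : IsLUR C) (x y z : H)
    (hx : x ∈ C) (hy : y ∈ C) (hz : z ∈ C) (hyb : y ∈ frontier C)
    (hxy : x ≠ y) (hzy : z ≠ y) (r s : ℝ) (hr : 0 < r) (hs : 0 < s)
    (hrxy : r ≤ ‖x - y‖) (hxys : ‖x - y‖ ≤ s) :
    -(s / Real.sqrt (s ^ 2 + 4 * lurModulus C x r ^ 2)) ≤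
      ⟪‖z - y‖⁻¹ • (z - y), ‖x - y‖⁻¹ • (x - y)⟫ :=
  inner_ge_of_lur_general C hC x y z hx hy hz hyb hxy hzy r s hrxy hxys
end

section
/- Let C be a LUR (locally uniformly rotund) set in a real Hilbert space H and let f : C → C be a nonexpansive mapping such that dist(f^k(x), ∂C) → 0 as k → ∞ for every x ∈ C. Let x₀ ∈ C be a fixed point of f. Then there is a continuous function α : (0, Δ_C(x₀)) → (0,1) such that for every r ∈ (0, Δ_C(x₀)) and every x ∈ C with ‖x − x₀‖ = r, there exists a positive integer k with ‖f^k(x) − x₀‖ ≤ α(r)·r. -/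
/-!
Averaging the LUR modulus `δ_C(x₀, ·)` over `[r/4, r/2]` gives a continuous positive `D(r)` with
`D(r) ≤ δ_C(x₀, r/2)`, and `α(r) := 1 - min ((D(r)/r)², 1)/2 ∈ [1/2, 1)` satisfies
`r² - (α r)² ≤ D(r)²`. If all iterates of `x` stayed farther than `α r` from `x₀`, the iterates
`aₖ` of the midpoint of `x₀` and `x` would stay within `r/2` of both `x₀` and `qₖ := fᵏ x`, so by
Apollonius' theorem within `D(r)/2` of the midpoint of `x₀` and `qₖ`. That midpoint is at least
`δ_C(x₀, α r) ≥ D(r)` away from `∂C`, so `dist(aₖ, ∂C) ≥ D(r)/2` for all `k`, contradicting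
`dist(aₖ, ∂C) → 0`.
-/

open Metric RealInnerProductSpace

variable {H : Type*} [NormedAddCommGroup H] [InnerProductSpace ℝ H]

open Set Filter Topology

lemma MonotoneOn.mul_le_intervalIntegral {g : ℝ → ℝ} {a b : ℝ} (hab : a ≤ b)
    (hg : MonotoneOn g (Icc a b)) : (b - a) * g a ≤ ∫ s in a..b, g s := by
  have hint : IntervalIntegrable g MeasureTheory.volume a b :=
    (uIcc_of_le hab ▸ hg).intervalIntegrable
  simpa using intervalIntegral.integral_mono_on hab intervalIntegrable_const hint
    fun s hs => hg (left_mem_Icc.2 hab) hs hs.1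

lemma MonotoneOn.intervalIntegral_le_mul {g : ℝ → ℝ} {a b : ℝ} (hab : a ≤ b)
    (hg : MonotoneOn g (Icc a b)) : ∫ s in a..b, g s ≤ (b - a) * g b := by
  have hint : IntervalIntegrable g MeasureTheory.volume a b :=
    (uIcc_of_le hab ▸ hg).intervalIntegrable
  simpa using intervalIntegral.integral_mono_on hab hint intervalIntegrable_const
    fun s hs => hg hs (right_mem_Icc.2 hab) hs.2

lemma MonotoneOn.continuousOn_intervalIntegral {g : ℝ → ℝ} {R : ℝ} (hg : MonotoneOn g (Iic R))
    {s : Set ℝ} {u v : ℝ → ℝ} (hu : ContinuousOn u s) (hv : ContinuousOn v s)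
    (huR : MapsTo u s (Iic R)) (hvR : MapsTo v s (Iic R)) :
    ContinuousOn (fun t => ∫ x in u t..v t, g x) s := by
  set h : ℝ → ℝ := fun x => g (min x R)
  have hh : Monotone h := fun x y hxy =>
    hg (mem_Iic.2 (min_le_right _ _)) (mem_Iic.2 (min_le_right _ _)) (min_le_min_right R hxy)
  have hint : ∀ a b, IntervalIntegrable h MeasureTheory.volume a b :=
    fun _ _ => hh.intervalIntegrable
  have hP := intervalIntegral.continuous_primitive hint 0
  refine ((hP.comp_continuousOn hv).sub (hP.comp_continuousOn hu)).congr fun t ht => ?_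
  show _ = (∫ x in 0..v t, h x) - ∫ x in 0..u t, h x
  rw [intervalIntegral.integral_interval_sub_left (hint _ _) (hint _ _)]
  refine intervalIntegral.integral_congr fun x hx => ?_
  exact congrArg g (min_eq_left (hx.2.trans (max_le (huR ht) (hvR ht)))).symm

lemma dist_midpoint_le_sqrt {x q a : H} {r ρ : ℝ} (hax : dist a x ≤ r / 2)
    (haq : dist a q ≤ r / 2) (hρ : ρ ≤ dist x q) (hρ0 : 0 ≤ ρ) :
    dist a (midpoint ℝ x q) ≤ √(r ^ 2 - ρ ^ 2) / 2 := by
  have hapol := EuclideanGeometry.dist_sq_add_dist_sq_eq_two_mul_dist_midpoint_sq_add_half_dist_sq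
    a x q
  have h1 : dist a x ^ 2 ≤ (r / 2) ^ 2 := pow_le_pow_left₀ dist_nonneg hax 2
  have h2 : dist a q ^ 2 ≤ (r / 2) ^ 2 := pow_le_pow_left₀ dist_nonneg haq 2
  have h3 : ρ ^ 2 ≤ dist x q ^ 2 := pow_le_pow_left₀ hρ0 hρ 2
  have : 2 * dist a (midpoint ℝ x q) ≤ √(r ^ 2 - ρ ^ 2) :=
    Real.le_sqrt_of_sq_le (by nlinarith)
  linarith

lemma lurModulus_monotoneOn {C : Set H} {x y : H} (hy : y ∈ C) :
    MonotoneOn (lurModulus C x) (Iic ‖y - x‖) := fun _ _ _ hε₂ hε =>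
  csInf_le_csInf ⟨0, by rintro t ⟨z, -, rfl⟩; exact infDist_nonneg⟩
    ⟨_, ⟨y, ⟨hy, hε₂⟩, rfl⟩⟩ (image_mono fun _ hz => ⟨hz.1, hε.trans hz.2⟩)

lemma lurModulus_sub_dist_midpoint_le_infDist {C : Set H} {x q a : H} {ε : ℝ} (hq : q ∈ C)
    (hε : ε ≤ ‖q - x‖) :
    lurModulus C x ε - dist a (midpoint ℝ x q) ≤ infDist a (frontier C) := by
  have hδ : lurModulus C x ε ≤ infDist (midpoint ℝ x q) (frontier C) := by
    rw [midpoint_eq_smul_add, invOf_eq_inv]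
    exact csInf_le ⟨0, by rintro t ⟨y, -, rfl⟩; exact infDist_nonneg⟩ ⟨q, ⟨hq, hε⟩, rfl⟩
  linarith [infDist_le_infDist_add_dist (x := midpoint ℝ x q) (y := a) (s := frontier C),
    dist_comm a (midpoint ℝ x q)]

theorem exists_iterate_norm_sub_lt {C : Set H} (hconv : Convex ℝ C) {f : C → C}
    (hf : LipschitzWith 1 f)
    (hiter : ∀ z : C, Tendsto (fun k : ℕ => infDist ((f^[k] z : C) : H) (frontier C)) atTop (𝓝 0))
    {x₀ : C} (hx₀ : f x₀ = x₀) (x : C) {ρ : ℝ} (hρ : 0 ≤ ρ)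
    (hδ : √(‖(x : H) - x₀‖ ^ 2 - ρ ^ 2) < 2 * lurModulus C x₀ ρ) :
    ∃ k, ‖((f^[k] x : C) : H) - x₀‖ < ρ := by
  by_contra! hfar
  set r := ‖(x : H) - x₀‖
  let z : C := ⟨midpoint ℝ (x₀ : H) x, hconv.midpoint_mem x₀.2 x.2⟩
  have hzx₀ : dist z x₀ = r / 2 := by
    rw [Subtype.dist_eq, dist_midpoint_left, dist_comm, dist_eq_norm]
    norm_num; ring
  have hzx : dist z x = r / 2 := by
    rw [Subtype.dist_eq, dist_midpoint_right, dist_comm, dist_eq_norm]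
    norm_num; ring
  have hbound : ∀ k, lurModulus C x₀ ρ - √(r ^ 2 - ρ ^ 2) / 2 ≤
      infDist ((f^[k] z : C) : H) (frontier C) := by
    intro k
    have hk := (hf.iterate k).dist_le_mul
    have h₀ : dist (f^[k] z) x₀ ≤ r / 2 := by
      simpa [Function.iterate_fixed hx₀ k, hzx₀] using hk z x₀
    have h₁ : dist (f^[k] z) (f^[k] x) ≤ r / 2 := by simpa [hzx] using hk z x
    refine le_trans ?_ (lurModulus_sub_dist_midpoint_le_infDist (f^[k] x).2 (hfar k))
    gcongr
    exact dist_midpoint_le_sqrt h₀ h₁ (by rw [dist_comm, dist_eq_norm]; exact hfar k) hρ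
  obtain ⟨k, hk⟩ := ((hiter z).eventually_lt_const
    (by linarith : (0 : ℝ) < lurModulus C x₀ ρ - √(r ^ 2 - ρ ^ 2) / 2)).exists
  exact (hbound k).not_gt hk

/-- A continuous stand-in for the monotone but possibly discontinuous `δ_C(x, r/2)`. -/
noncomputable def avgLurModulus (C : Set H) (x : H) (r : ℝ) : ℝ :=
  4 / r * ∫ s in r / 4..r / 2, lurModulus C x s

section avgLurModulus

variable {C : Set H} {x y : H} {r : ℝ}

lemma avgLurModulus_mem_Icc (hy : y ∈ C) (hr : 0 < r) (hry : r / 2 ≤ ‖y - x‖) :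
    avgLurModulus C x r ∈ Icc (lurModulus C x (r / 4)) (lurModulus C x (r / 2)) := by
  have hg : MonotoneOn (lurModulus C x) (Icc (r / 4) (r / 2)) :=
    (lurModulus_monotoneOn hy).mono fun s hs => hs.2.trans hry
  have h4 : r / 4 ≤ r / 2 := by linarith
  have hcancel : ∀ c, 4 / r * ((r / 2 - r / 4) * c) = c := fun c => by field_simp; ring
  constructor
  · rw [← hcancel (lurModulus C x (r / 4))]
    exact mul_le_mul_of_nonneg_left (hg.mul_le_intervalIntegral h4) (by positivity)
  · rw [← hcancel (lurModulus C x (r / 2))]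
    exact mul_le_mul_of_nonneg_left (hg.intervalIntegral_le_mul h4) (by positivity)

lemma avgLurModulus_pos (hC : IsLUR C) (hx : x ∈ C) (hy : y ∈ C) (hr : 0 < r)
    (hry : r < ‖y - x‖) : 0 < avgLurModulus C x r :=
  (hC.2.2 x hx (r / 4) (by positivity) ⟨y, hy, by linarith⟩).trans_le
    (avgLurModulus_mem_Icc hy hr (by linarith)).1

lemma continuousAt_avgLurModulus (hy : y ∈ C) (hr : 0 < r) (hry : r < ‖y - x‖) :
    ContinuousAt (avgLurModulus C x) r := by
  have hint : ContinuousOn (fun t => ∫ s in t / 4..t / 2, lurModulus C x s) (Ioo 0 ‖y - x‖) :=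
    (lurModulus_monotoneOn hy).continuousOn_intervalIntegral (continuousOn_id.div_const 4)
      (continuousOn_id.div_const 2) (fun t ht => by simp only [mem_Iic]; linarith [ht.1, ht.2])
      (fun t ht => by simp only [mem_Iic]; linarith [ht.1, ht.2])
  exact (continuousAt_const.div continuousAt_id hr.ne').mul
    (hint.continuousAt (Ioo_mem_nhds hr hry))

end avgLurModulus

noncomputable def contractionFactor (C : Set H) (x : H) (r : ℝ) : ℝ :=
  1 - min ((avgLurModulus C x r / r) ^ 2) 1 / 2

section contractionFactor

variable {C : Set H} {x y : H} {r : ℝ}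

lemma half_le_contractionFactor (C : Set H) (x : H) (r : ℝ) :
    1 / 2 ≤ contractionFactor C x r := by
  unfold contractionFactor
  linarith [min_le_right ((avgLurModulus C x r / r) ^ 2) 1]

lemma contractionFactor_lt_one (hr : r ≠ 0) (hD : avgLurModulus C x r ≠ 0) :
    contractionFactor C x r < 1 := by
  have : 0 < min ((avgLurModulus C x r / r) ^ 2) 1 := lt_min (by positivity) one_pos
  unfold contractionFactor
  linarith

lemma sq_sub_sq_contractionFactor_mul_le (hr : r ≠ 0) :
    r ^ 2 - (contractionFactor C x r * r) ^ 2 ≤ avgLurModulus C x r ^ 2 := by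
  set m := min ((avgLurModulus C x r / r) ^ 2) 1
  have hm0 : 0 ≤ m := le_min (sq_nonneg _) zero_le_one
  have hm1 : m ≤ 1 := min_le_right _ _
  have hmD : r ^ 2 * m ≤ avgLurModulus C x r ^ 2 := by
    calc r ^ 2 * m ≤ r ^ 2 * (avgLurModulus C x r / r) ^ 2 :=
          mul_le_mul_of_nonneg_left (min_le_left _ _) (sq_nonneg r)
      _ = avgLurModulus C x r ^ 2 := by field_simp
  have : r ^ 2 - (contractionFactor C x r * r) ^ 2 = r ^ 2 * (m - m ^ 2 / 4) := by
    unfold contractionFactor; ring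
  nlinarith [sq_nonneg r]

lemma continuousAt_contractionFactor (hy : y ∈ C) (hr : 0 < r) (hry : r < ‖y - x‖) :
    ContinuousAt (contractionFactor C x) r :=
  continuousAt_const.sub ((((continuousAt_avgLurModulus hy hr hry).div continuousAt_id
    hr.ne').pow 2).min continuousAt_const |>.div_const 2)

lemma sqrt_sq_sub_sq_lt_two_mul_lurModulus (hC : IsLUR C) (hx : x ∈ C) (hy : y ∈ C)
    (hr : 0 < r) (hry : r < ‖y - x‖) :
    √(r ^ 2 - (contractionFactor C x r * r) ^ 2) <
      2 * lurModulus C x (contractionFactor C x r * r) := by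
  have hD := avgLurModulus_pos hC hx hy hr hry
  have hα := contractionFactor_lt_one hr.ne' hD.ne'
  calc √(r ^ 2 - (contractionFactor C x r * r) ^ 2) ≤ avgLurModulus C x r :=
        (Real.sqrt_le_left hD.le).2 (sq_sub_sq_contractionFactor_mul_le hr.ne')
    _ < 2 * avgLurModulus C x r := by linarith
    _ ≤ 2 * lurModulus C x (r / 2) := by
        gcongr; exact (avgLurModulus_mem_Icc hy hr (by linarith)).2
    _ ≤ 2 * lurModulus C x (contractionFactor C x r * r) := by
        gcongr 2 * ?_
        refine lurModulus_monotoneOn hy (by simp only [mem_Iic]; linarith) ?_ ?_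
        · simp only [mem_Iic]; nlinarith
        · nlinarith [half_le_contractionFactor C x r]

end contractionFactor

/-- Let `C` be LUR and `f : C → C` nonexpansive with `dist(fᵏ(x), ∂C) → 0` for every
`x ∈ C`, and let `x₀` be a fixed point of `f`. Then there is a continuous function
`α : (0, Δ_C(x₀)) → (0,1)` such that for every `r ∈ (0, Δ_C(x₀))` and every `x ∈ C` with
`‖x − x₀‖ = r` there is a positive integer `k` with `‖fᵏ(x) − x₀‖ ≤ α(r)·r`. -/
theorem exists_contraction_modulus (C : Set H) (hC : IsLUR C)
    (f : C → C) (hf : ∀ x y : C, dist (f x) (f y) ≤ dist x y)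
    (hiter : ∀ x : C, Filter.Tendsto
      (fun k : ℕ => infDist ((f^[k] x : C) : H) (frontier C)) Filter.atTop (nhds 0))
    (x₀ : C) (hx₀ : f x₀ = x₀) :
    ∃ α : ℝ → ℝ,
      ContinuousOn α {r : ℝ | 0 < r ∧ ∃ y ∈ C, r < ‖y - (x₀ : H)‖} ∧
      (∀ r ∈ {r : ℝ | 0 < r ∧ ∃ y ∈ C, r < ‖y - (x₀ : H)‖}, α r ∈ Set.Ioo (0 : ℝ) 1) ∧
      ∀ r ∈ {r : ℝ | 0 < r ∧ ∃ y ∈ C, r < ‖y - (x₀ : H)‖}, ∀ x : C,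
        ‖(x : H) - (x₀ : H)‖ = r →
          ∃ k : ℕ, 0 < k ∧ ‖((f^[k] x : C) : H) - (x₀ : H)‖ ≤ α r * r := by
  have hf₁ : LipschitzWith 1 f := LipschitzWith.of_dist_le_mul fun x y => by simpa using hf x y
  refine ⟨contractionFactor C x₀, fun r ⟨hr, y, hy, hry⟩ =>
    (continuousAt_contractionFactor hy hr hry).continuousWithinAt, fun r ⟨hr, y, hy, hry⟩ =>
    ⟨by linarith [half_le_contractionFactor C x₀ r],
      contractionFactor_lt_one hr.ne' (avgLurModulus_pos hC x₀.2 hy hr hry).ne'⟩, ?_⟩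
  rintro r ⟨hr, y, hy, hry⟩ x rfl
  set r := ‖(x : H) - x₀‖
  have hα := contractionFactor_lt_one hr.ne' (avgLurModulus_pos hC x₀.2 hy hr hry).ne'
  obtain ⟨k, hk⟩ := exists_iterate_norm_sub_lt hC.1 hf₁ hiter hx₀ x
    (by nlinarith [half_le_contractionFactor C x₀ r])
    (sqrt_sq_sub_sq_lt_two_mul_lurModulus hC x₀.2 hy hr hry)
  refine ⟨k, Nat.pos_of_ne_zero ?_, hk.le⟩
  rintro rfl
  rw [Function.iterate_zero, id] at hk
  nlinarith
end
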